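/- arXiv:2201.07446 — 3 statements merged into one kernel-verified Lean document; each statement's English description precedes it below -/
import Mathlib

section
/- For any fixed λ ∈ (0, 1/3], the map (i_n) ↦ (1-λ)·∑_{n≥1} i_n·λ^{n-1} from {-1,0,1}^ℕ to ℝ is monotone increasing with respect to the lexicographical order; moreover, if λ ∈ (0,1/3) it is strictly increasing. -/
open scoped Pointwise

/-- `PiFun i λ = (1-λ) ∑_{n≥0} i_n λ^n`, the series Π from the paper (0-based indexing). -/
noncomputable def PiFun (i : ℕ → ℝ) (l : ℝ) : ℝ := (1 - l) * ∑' n : ℕ, i n * l ^ n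

/-- `i` is a sequence over the alphabet `{-1,0,1}`. -/
def IsCoding (i : ℕ → ℝ) : Prop := ∀ n, i n = -1 ∨ i n = 0 ∨ i n = 1

/-- Strict lexicographic order on sequences. -/
def LexLt (i j : ℕ → ℝ) : Prop := ∃ m, (∀ n, n < m → i n = j n) ∧ i m < j m

/-- Non-strict lexicographic order on sequences. -/
def LexLe (i j : ℕ → ℝ) : Prop := LexLt i j ∨ i = j

-- `rho i j = 3^{-k}` where `k` is the first (0-based) index at which the sequences differ
-- (this equals `3^{1-k}` for 1-based indexing as in the paper).
open Classical in
noncomputable def rho (i j : ℕ → ℝ) : ℝ :=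
  if i = j then 0 else (3 : ℝ) ^ (-((sInf {n : ℕ | i n ≠ j n} : ℕ) : ℤ))

/-- The middle-`(1-2λ)` Cantor set `C_λ`. -/
def Cset (l : ℝ) : Set ℝ :=
  {x | ∃ i : ℕ → ℝ, (∀ n, i n = 0 ∨ i n = 1) ∧ x = (1 - l) * ∑' n : ℕ, i n * l ^ n}

/-- `Λ(t) = {λ ∈ (0,1/3] : t ∈ C_λ - C_λ}`. -/
def Lam (t : ℝ) : Set ℝ := {l | l ∈ Set.Ioc (0 : ℝ) (1/3) ∧ t ∈ Cset l - Cset l}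

/-! If `i` and `j` first differ at index `m`, then `j m - i m ≥ 1` while every later difference
is at least `-2`, so `Π(j) - Π(i) ≥ (1 - λ) λ^m (1 - 2λ / (1 - λ)) = λ^m (1 - 3λ)`. -/

lemma IsCoding.abs_le_one {i : ℕ → ℝ} (hi : IsCoding i) (n : ℕ) : |i n| ≤ 1 := by
  rcases hi n with h | h | h <;> simp [h]

lemma IsCoding.abs_sub_le_two {i j : ℕ → ℝ} (hi : IsCoding i) (hj : IsCoding j) (n : ℕ) :
    |j n - i n| ≤ 2 := by
  linarith [abs_sub (j n) (i n), hi.abs_le_one n, hj.abs_le_one n]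

lemma IsCoding.one_le_sub_of_lt {i j : ℕ → ℝ} (hi : IsCoding i) (hj : IsCoding j) {n : ℕ}
    (h : i n < j n) : 1 ≤ j n - i n := by
  rcases hi n with a | a | a <;> rcases hj n with b | b | b <;> rw [a, b] at h ⊢ <;> linarith

lemma summable_mul_pow_of_abs_le {a : ℕ → ℝ} {C l : ℝ} (ha : ∀ n, |a n| ≤ C) (hl : |l| < 1) :
    Summable fun n => a n * l ^ n :=
  Summable.of_norm_bounded ((summable_geometric_of_lt_one (abs_nonneg l) hl).mul_left C)
    fun n => by
      rw [Real.norm_eq_abs, abs_mul, abs_pow]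
      exact mul_le_mul_of_nonneg_right (ha n) (pow_nonneg (abs_nonneg l) n)

lemma IsCoding.summable_mul_pow {i : ℕ → ℝ} (hi : IsCoding i) {l : ℝ} (hl : |l| < 1) :
    Summable fun n => i n * l ^ n :=
  summable_mul_pow_of_abs_le hi.abs_le_one hl

lemma tsum_mul_pow_eq_pow_mul_tsum_of_eq_zero {a : ℕ → ℝ} {l : ℝ} {m : ℕ}
    (ha : Summable fun n => a n * l ^ n) (hm : ∀ n < m, a n = 0) :
    ∑' n, a n * l ^ n = l ^ m * ∑' n, a (n + m) * l ^ n := by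
  rw [← ha.sum_add_tsum_nat_add m,
    Finset.sum_eq_zero fun n hn => by rw [hm n (Finset.mem_range.mp hn), zero_mul],
    zero_add, ← tsum_mul_left]
  exact tsum_congr fun n => by ring

lemma one_sub_three_mul_le_mul_tsum_mul_pow {a : ℕ → ℝ} {l : ℝ} (h0 : 0 ≤ l) (h1 : l < 1)
    (ha : Summable fun n => a n * l ^ n) (ha0 : 1 ≤ a 0) (ha2 : ∀ n, -2 ≤ a n) :
    1 - 3 * l ≤ (1 - l) * ∑' n, a n * l ^ n := by
  have hgeom := summable_geometric_of_lt_one h0 h1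
  have htail : -2 * l * (1 - l)⁻¹ ≤ ∑' n, a (n + 1) * l ^ (n + 1) := by
    rw [← tsum_geometric_of_lt_one h0 h1, ← tsum_mul_left]
    refine hgeom.mul_left _ |>.tsum_le_tsum (fun n => ?_) ((summable_nat_add_iff 1).mpr ha)
    rw [pow_succ]
    nlinarith [mul_nonneg (by linarith [ha2 (n + 1)] : (0 : ℝ) ≤ a (n + 1) + 2)
      (mul_nonneg (pow_nonneg h0 n) h0)]
  have h1l : 0 < 1 - l := by linarith
  rw [ha.tsum_eq_zero_add, pow_zero, mul_one]
  calc 1 - 3 * l = (1 - l) * (1 + -2 * l * (1 - l)⁻¹) := by field_simp; ring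
    _ ≤ (1 - l) * (a 0 + ∑' n, a (n + 1) * l ^ (n + 1)) := by gcongr

lemma PiFun_sub_PiFun {i j : ℕ → ℝ} {l : ℝ} (hi : Summable fun n => i n * l ^ n)
    (hj : Summable fun n => j n * l ^ n) :
    PiFun j l - PiFun i l = (1 - l) * ∑' n, (j n - i n) * l ^ n := by
  simp_rw [PiFun, ← mul_sub, ← hj.tsum_sub hi, sub_mul]

lemma pow_mul_one_sub_three_mul_le_PiFun_sub {l : ℝ} (h0 : 0 ≤ l) (h1 : l < 1) {i j : ℕ → ℝ}
    (hi : IsCoding i) (hj : IsCoding j) {m : ℕ} (hm : ∀ n < m, i n = j n) (hlt : i m < j m) :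
    l ^ m * (1 - 3 * l) ≤ PiFun j l - PiFun i l := by
  have hl : |l| < 1 := by rwa [abs_of_nonneg h0]
  have hdiff : ∀ n, |j n - i n| ≤ 2 := hi.abs_sub_le_two hj
  rw [PiFun_sub_PiFun (hi.summable_mul_pow hl) (hj.summable_mul_pow hl),
    tsum_mul_pow_eq_pow_mul_tsum_of_eq_zero (summable_mul_pow_of_abs_le hdiff hl)
      fun n hn => by rw [hm n hn, sub_self]]
  have htail := one_sub_three_mul_le_mul_tsum_mul_pow h0 h1
    (summable_mul_pow_of_abs_le (fun n => hdiff (n + m)) hl)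
    (by simpa using hi.one_le_sub_of_lt hj hlt) fun n => (abs_le.mp (hdiff (n + m))).1
  calc l ^ m * (1 - 3 * l) ≤ l ^ m * ((1 - l) * ∑' n, (j (n + m) - i (n + m)) * l ^ n) :=
        mul_le_mul_of_nonneg_left htail (pow_nonneg h0 m)
    _ = _ := by ring

theorem stmt1 (l : ℝ) (hl : l ∈ Set.Ioc (0 : ℝ) (1/3)) (i j : ℕ → ℝ)
    (hi : IsCoding i) (hj : IsCoding j) (hij : LexLt i j) :
    PiFun i l ≤ PiFun j l ∧ (l < 1/3 → PiFun i l < PiFun j l) := by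
  obtain ⟨h0, h13⟩ := hl
  obtain ⟨m, hm, hlt⟩ := hij
  have hbound := pow_mul_one_sub_three_mul_le_PiFun_sub h0.le (by linarith) hi hj hm hlt
  have hpow := pow_pos h0 m
  exact ⟨by nlinarith, fun h => by nlinarith⟩
end

section
/- For every t ∈ (0,1) with t ≠ 1/3, the set Λ(t) = {λ ∈ (0,1/3] : C_λ ∩ (C_λ + t) ≠ ∅} satisfies min Λ(t) = min{t, (1−t)/2} and max Λ(t) = 1/3. -/
/-!
A point of `C_λ ∩ (C_λ + t)` amounts to a representation `t = (1 - λ) ∑ jₙ λⁿ` with digits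
`jₙ ∈ {-1, 0, 1}` (split the coding into its positive and negative parts). For `λ < 1/2` and
`t > 0` the leading digit is `0` or `1`, which forces `t ≤ λ` or `t ≥ 1 - 2λ`, i.e.
`λ ≥ min t ((1 - t) / 2)`; the codings `0111…` and `1(-1)(-1)…` attain this bound. For
`λ ≥ 1/3` the two-sided greedy expansion represents every point of `[-1, 1]`, so `1/3 ∈ Λ(t)`.
-/

open scoped Pointwise

lemma IsCoding.abs_le_one_s11 {j : ℕ → ℝ} (hj : IsCoding j) (n : ℕ) : |j n| ≤ 1 := by
  rcases hj n with h | h | h <;> simp [h]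

lemma isCoding_of_binary {a : ℕ → ℝ} (ha : ∀ n, a n = 0 ∨ a n = 1) : IsCoding a :=
  fun n => Or.inr (ha n)

lemma isCoding_sub_of_binary {a b : ℕ → ℝ} (ha : ∀ n, a n = 0 ∨ a n = 1)
    (hb : ∀ n, b n = 0 ∨ b n = 1) : IsCoding fun n => a n - b n := by
  intro n
  rcases ha n with h | h <;> rcases hb n with h' | h' <;> simp [h, h']

section PiFun

variable {j k : ℕ → ℝ} {l : ℝ}

lemma summable_mul_pow_of_abs_le_one (hj : ∀ n, |j n| ≤ 1) (hl0 : 0 ≤ l) (hl1 : l < 1) :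
    Summable fun n => j n * l ^ n := by
  refine Summable.of_norm_bounded (summable_geometric_of_lt_one hl0 hl1) fun n => ?_
  rw [Real.norm_eq_abs, abs_mul, abs_pow, abs_of_nonneg hl0]
  exact mul_le_of_le_one_left (pow_nonneg hl0 n) (hj n)

lemma abs_piFun_le_one (hj : ∀ n, |j n| ≤ 1) (hl0 : 0 ≤ l) (hl1 : l < 1) :
    |PiFun j l| ≤ 1 := by
  have hsum : ‖∑' n, j n * l ^ n‖ ≤ (1 - l)⁻¹ := by
    refine tsum_of_norm_bounded (hasSum_geometric_of_lt_one hl0 hl1) fun n => ?_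
    rw [Real.norm_eq_abs, abs_mul, abs_pow, abs_of_nonneg hl0]
    exact mul_le_of_le_one_left (pow_nonneg hl0 n) (hj n)
  rw [Real.norm_eq_abs] at hsum
  rw [PiFun, abs_mul, abs_of_pos (sub_pos.2 hl1)]
  calc (1 - l) * |∑' n, j n * l ^ n| ≤ (1 - l) * (1 - l)⁻¹ := by gcongr
    _ = 1 := mul_inv_cancel₀ (by linarith)

lemma piFun_eq_head_add_tail (hj : ∀ n, |j n| ≤ 1) (hl0 : 0 ≤ l) (hl1 : l < 1) :
    PiFun j l = (1 - l) * j 0 + l * PiFun (fun n => j (n + 1)) l := by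
  have hshift : ∀ n, j (n + 1) * l ^ (n + 1) = l * (j (n + 1) * l ^ n) := fun n => by ring
  rw [PiFun, PiFun, (summable_mul_pow_of_abs_le_one hj hl0 hl1).tsum_eq_zero_add]
  simp_rw [hshift, tsum_mul_left]
  ring

lemma piFun_const (c : ℝ) (hl0 : 0 ≤ l) (hl1 : l < 1) : PiFun (fun _ => c) l = c := by
  rw [PiFun, tsum_mul_left, tsum_geometric_of_lt_one hl0 hl1]
  field_simp [(sub_pos.2 hl1).ne']

lemma piFun_sub (hj : ∀ n, |j n| ≤ 1) (hk : ∀ n, |k n| ≤ 1) (hl0 : 0 ≤ l) (hl1 : l < 1) :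
    PiFun (fun n => j n - k n) l = PiFun j l - PiFun k l := by
  rw [PiFun, PiFun, PiFun, ← mul_sub, ← (summable_mul_pow_of_abs_le_one hj hl0 hl1).tsum_sub
    (summable_mul_pow_of_abs_le_one hk hl0 hl1)]
  simp_rw [sub_mul]

lemma piFun_ite_zero {a c : ℝ} (ha : |a| ≤ 1) (hc : |c| ≤ 1) (hl0 : 0 ≤ l) (hl1 : l < 1) :
    PiFun (fun n => if n = 0 then a else c) l = (1 - l) * a + l * c := by
  rw [piFun_eq_head_add_tail (fun n => by split_ifs <;> assumption) hl0 hl1]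
  simp only [if_pos, Nat.add_one_ne_zero, if_false]
  rw [piFun_const c hl0 hl1]

lemma piFun_eq_of_forall_eq_add {j r : ℕ → ℝ} {l C : ℝ} (hj : ∀ n, |j n| ≤ 1) (hl0 : 0 ≤ l)
    (hl1 : l < 1) (hr : ∀ n, |r n| ≤ C) (hrec : ∀ n, r n = (1 - l) * j n + l * r (n + 1)) :
    PiFun j l = r 0 := by
  have hpartial : ∀ n, (1 - l) * ∑ i ∈ Finset.range n, j i * l ^ i + l ^ n * r n = r 0 := by
    intro n
    induction n with
    | zero => simp
    | succ n ih =>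
      rw [Finset.sum_range_succ]
      linear_combination ih - l ^ n * hrec n
  have hsums : Filter.Tendsto (fun n => (1 - l) * ∑ i ∈ Finset.range n, j i * l ^ i)
      Filter.atTop (nhds (PiFun j l)) :=
    ((summable_mul_pow_of_abs_le_one hj hl0 hl1).hasSum.tendsto_sum_nat).const_mul _
  have hrem : Filter.Tendsto (fun n => l ^ n * r n) Filter.atTop (nhds 0) := by
    refine squeeze_zero_norm (a := fun n => l ^ n * C) (fun n => ?_) ?_
    · rw [Real.norm_eq_abs, abs_mul, abs_pow, abs_of_nonneg hl0]
      exact mul_le_mul_of_nonneg_left (hr n) (pow_nonneg hl0 n)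
    · simpa using (tendsto_pow_atTop_nhds_zero_of_lt_one hl0 hl1).mul_const C
  have hconst := hsums.add hrem
  simp only [hpartial, add_zero] at hconst
  exact tendsto_nhds_unique hconst tendsto_const_nhds

end PiFun

lemma cset_inter_image_add_nonempty_iff {l t : ℝ} (hl0 : 0 ≤ l) (hl1 : l < 1) :
    (Cset l ∩ ((fun x => x + t) '' Cset l)).Nonempty ↔ ∃ j, IsCoding j ∧ PiFun j l = t := by
  constructor
  · rintro ⟨_, ⟨a, ha, rfl⟩, _, ⟨b, hb, rfl⟩, hab⟩
    refine ⟨_, isCoding_sub_of_binary ha hb, ?_⟩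
    rw [piFun_sub (isCoding_of_binary ha).abs_le_one_s11 (isCoding_of_binary hb).abs_le_one_s11 hl0 hl1]
    simp only [PiFun] at hab ⊢
    linarith
  · rintro ⟨j, hj, rfl⟩
    set a : ℕ → ℝ := fun n => if j n = 1 then 1 else 0
    set b : ℕ → ℝ := fun n => if j n = -1 then 1 else 0
    have ha : ∀ n, a n = 0 ∨ a n = 1 := fun n => by simp only [a]; split_ifs <;> simp
    have hb : ∀ n, b n = 0 ∨ b n = 1 := fun n => by simp only [b]; split_ifs <;> simp
    have hj_eq : j = fun n => a n - b n := by
      ext n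
      rcases hj n with h | h | h <;> norm_num [a, b, h]
    refine ⟨PiFun a l, ⟨a, ha, rfl⟩, PiFun b l, ⟨b, hb, rfl⟩, ?_⟩
    rw [hj_eq, piFun_sub (isCoding_of_binary ha).abs_le_one_s11 (isCoding_of_binary hb).abs_le_one_s11
      hl0 hl1]
    ring

lemma min_piFun_le_of_pos {j : ℕ → ℝ} {l : ℝ} (hj : IsCoding j) (hl0 : 0 ≤ l) (hl : l < 1 / 2)
    (hpos : 0 < PiFun j l) : min (PiFun j l) ((1 - PiFun j l) / 2) ≤ l := by
  have hl1 : l < 1 := by linarith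
  have htail := abs_le.mp (abs_piFun_le_one (fun n => hj.abs_le_one_s11 (n + 1)) hl0 hl1)
  have hhead := piFun_eq_head_add_tail hj.abs_le_one_s11 hl0 hl1
  set s := PiFun j l
  set T := PiFun (fun n => j (n + 1)) l
  have hlT : l * T ≤ l := mul_le_of_le_one_right hl0 htail.2
  have hlT' : -l ≤ l * T := by nlinarith
  rcases hj 0 with h | h | h <;> rw [h] at hhead
  · linarith
  · exact (min_le_left _ _).trans (by linarith)
  · exact (min_le_right _ _).trans (by linarith)

lemma exists_isCoding_piFun_min_eq {t : ℝ} (ht0 : 0 < t) (ht1 : t < 1) :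
    ∃ j, IsCoding j ∧ PiFun j (min t ((1 - t) / 2)) = t := by
  rcases le_total t ((1 - t) / 2) with h | h
  · refine ⟨fun n => if n = 0 then 0 else 1, fun n => by dsimp only; split_ifs <;> simp, ?_⟩
    rw [min_eq_left h, piFun_ite_zero (by simp) (by simp) ht0.le ht1]
    ring
  · refine ⟨fun n => if n = 0 then 1 else -1, fun n => by dsimp only; split_ifs <;> simp, ?_⟩
    rw [min_eq_right h, piFun_ite_zero (by simp) (by simp) (by linarith) (by linarith)]
    ring

section BalancedExpansion

variable {l : ℝ}

noncomputable def balancedDigit (l s : ℝ) : ℝ :=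
  if (1 - l) / 2 ≤ s then 1 else if s ≤ -((1 - l) / 2) then -1 else 0

noncomputable def balancedShift (l s : ℝ) : ℝ := (s - (1 - l) * balancedDigit l s) / l

lemma balancedDigit_mem (s : ℝ) : balancedDigit l s = -1 ∨ balancedDigit l s = 0 ∨
    balancedDigit l s = 1 := by
  unfold balancedDigit; split_ifs <;> simp

-- The overlap condition `1 - l ≤ 2 l` is what keeps the shift inside `[-1, 1]`.
lemma abs_balancedShift_le_one (hl : 1 / 3 ≤ l) {s : ℝ} (hs : |s| ≤ 1) :
    |balancedShift l s| ≤ 1 := by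
  have hl0 : 0 < l := by linarith
  rw [balancedShift, abs_div, abs_of_pos hl0, div_le_one hl0, abs_le]
  rw [abs_le] at hs
  unfold balancedDigit
  split_ifs <;> constructor <;> linarith

theorem exists_isCoding_piFun_eq (hl : 1 / 3 ≤ l) (hl1 : l < 1) {s : ℝ} (hs : |s| ≤ 1) :
    ∃ j, IsCoding j ∧ PiFun j l = s := by
  set r : ℕ → ℝ := fun n => (balancedShift l)^[n] s
  have hr : ∀ n, |r n| ≤ 1 := by
    intro n
    induction n with
    | zero => exact hs
    | succ n ih =>
      simp only [r, Function.iterate_succ_apply']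
      exact abs_balancedShift_le_one hl ih
  have hj : IsCoding fun n => balancedDigit l (r n) := fun n => balancedDigit_mem _
  refine ⟨_, hj, piFun_eq_of_forall_eq_add (fun n => ?_) (by linarith) hl1 hr fun n => ?_⟩
  · exact hj.abs_le_one_s11 n
  · simp only [r, Function.iterate_succ_apply', balancedShift]
    field_simp
    ring

end BalancedExpansion

theorem stmt11_general (t : ℝ) (ht : t ∈ Set.Ioo (0 : ℝ) 1) :
    IsLeast {l | l ∈ Set.Ioc (0 : ℝ) (1/3) ∧ (Cset l ∩ ((fun x => x + t) '' Cset l)).Nonempty}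
      (min t ((1 - t) / 2)) ∧
    IsGreatest {l | l ∈ Set.Ioc (0 : ℝ) (1/3) ∧ (Cset l ∩ ((fun x => x + t) '' Cset l)).Nonempty}
      (1/3) := by
  obtain ⟨ht0, ht1⟩ := ht
  have hmin_pos : 0 < min t ((1 - t) / 2) := lt_min ht0 (by linarith)
  have hmin_le : min t ((1 - t) / 2) ≤ 1 / 3 := by
    rcases le_total t (1 / 3) with h | h
    · exact (min_le_left _ _).trans h
    · exact (min_le_right _ _).trans (by linarith)
  refine ⟨⟨⟨⟨hmin_pos, hmin_le⟩, ?_⟩, ?_⟩, ⟨⟨by norm_num, le_rfl⟩, ?_⟩, fun l hl => hl.1.2⟩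
  · exact (cset_inter_image_add_nonempty_iff hmin_pos.le (by linarith)).2
      (exists_isCoding_piFun_min_eq ht0 ht1)
  · rintro l ⟨⟨hl0, hl3⟩, hne⟩
    obtain ⟨j, hj, rfl⟩ := (cset_inter_image_add_nonempty_iff hl0.le (by linarith)).1 hne
    exact min_piFun_le_of_pos hj hl0.le (by linarith) ht0
  · refine (cset_inter_image_add_nonempty_iff (by norm_num) (by norm_num)).2 ?_
    exact exists_isCoding_piFun_eq le_rfl (by norm_num) (abs_le.2 ⟨by linarith, ht1.le⟩)

theorem stmt11 (t : ℝ) (ht : t ∈ Set.Ioo (0 : ℝ) 1) (ht3 : t ≠ 1/3) :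
    IsLeast {l | l ∈ Set.Ioc (0 : ℝ) (1/3) ∧ (Cset l ∩ ((fun x => x + t) '' Cset l)).Nonempty}
      (min t ((1 - t) / 2)) ∧
    IsGreatest {l | l ∈ Set.Ioc (0 : ℝ) (1/3) ∧ (Cset l ∩ ((fun x => x + t) '' Cset l)).Nonempty}
      (1/3) :=
  stmt11_general t ht
end

section
/- For every t ∈ (0,1) with t ≠ 1/3, the set Λ(t) = {λ ∈ (0,1/3] : C_λ ∩ (C_λ + t) ≠ ∅} is a closed subset of ℝ. -/
open scoped Pointwise

open Filter Topology

lemma summable_aux {i : ℕ → ℝ} (hi : ∀ n, |i n| ≤ 1) {l : ℝ} (hl : |l| < 1) :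
    Summable fun n => i n * l ^ n := by
  refine Summable.of_norm (Summable.of_nonneg_of_le (fun n => norm_nonneg _) (fun n => ?_)
    (summable_geometric_of_lt_one (abs_nonneg l) hl))
  rw [norm_mul, norm_pow, Real.norm_eq_abs, Real.norm_eq_abs]
  exact mul_le_of_le_one_left (by positivity) (hi n)

lemma abs_tsum_le {i : ℕ → ℝ} (hi : ∀ n, |i n| ≤ 1) {l : ℝ} (h0 : 0 ≤ l) (hl : l < 1) :
    |∑' n, i n * l ^ n| ≤ (1 - l)⁻¹ := by
  have habs : |l| < 1 := by rwa [abs_of_nonneg h0]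
  have hs : Summable fun n => ‖i n * l ^ n‖ := (summable_aux hi habs).norm
  calc |∑' n, i n * l ^ n| ≤ ∑' n, ‖i n * l ^ n‖ := by
        simpa using norm_tsum_le_tsum_norm hs
    _ ≤ ∑' n : ℕ, l ^ n := by
        refine Summable.tsum_le_tsum (fun n => ?_) hs (summable_geometric_of_lt_one h0 hl)
        rw [norm_mul, norm_pow, Real.norm_eq_abs, Real.norm_eq_abs, abs_of_nonneg h0]
        exact mul_le_of_le_one_left (by positivity) (hi n)
    _ = (1 - l)⁻¹ := tsum_geometric_of_lt_one h0 hl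

lemma abs_le_of01 {i : ℕ → ℝ} (hi : ∀ n, i n = 0 ∨ i n = 1) : ∀ n, |i n| ≤ 1 := by
  intro n; rcases hi n with h | h <;> simp [h]

lemma abs_le_of101 {i : ℕ → ℝ} (hi : ∀ n, i n = -1 ∨ i n = 0 ∨ i n = 1) : ∀ n, |i n| ≤ 1 := by
  intro n; rcases hi n with h | h | h <;> simp [h]

lemma mem_diff_iff {l t : ℝ} (hl : |l| < 1) :
    t ∈ Cset l - Cset l ↔
      ∃ d : ℕ → ℝ, (∀ n, d n = -1 ∨ d n = 0 ∨ d n = 1) ∧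
        t = (1 - l) * ∑' n, d n * l ^ n := by
  constructor
  · rintro ⟨a, ⟨i, hi, rfl⟩, b, ⟨j, hj, rfl⟩, rfl⟩
    refine ⟨fun n => i n - j n, fun n => ?_, ?_⟩
    · rcases hi n with h | h <;> rcases hj n with h' | h' <;> simp [h, h']
    · have hsi := summable_aux (abs_le_of01 hi) hl
      have hsj := summable_aux (abs_le_of01 hj) hl
      show _ - _ = _
      rw [← mul_sub, ← Summable.tsum_sub hsi hsj]
      exact congrArg _ (tsum_congr fun n => by ring)
  · rintro ⟨d, hd, rfl⟩
    refine ⟨(1 - l) * ∑' n, (if d n = 1 then (1:ℝ) else 0) * l ^ n,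
      ⟨fun n => if d n = 1 then (1:ℝ) else 0, fun n => by by_cases h : d n = 1 <;> simp [h], rfl⟩,
      (1 - l) * ∑' n, (if d n = -1 then (1:ℝ) else 0) * l ^ n,
      ⟨fun n => if d n = -1 then (1:ℝ) else 0, fun n => by by_cases h : d n = -1 <;> simp [h], rfl⟩, ?_⟩
    have hsi : Summable fun n => (if d n = 1 then (1:ℝ) else 0) * l ^ n :=
      summable_aux (fun n => by split <;> simp) hl
    have hsj : Summable fun n => (if d n = -1 then (1:ℝ) else 0) * l ^ n :=
      summable_aux (fun n => by split <;> simp) hl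
    show _ - _ = _
    rw [← mul_sub, ← Summable.tsum_sub hsi hsj]
    refine congrArg _ (tsum_congr fun n => ?_)
    rcases hd n with h | h | h <;> norm_num [h]

lemma key_bound {d : ℕ → ℝ} (hd : ∀ n, d n = -1 ∨ d n = 0 ∨ d n = 1) {l t : ℝ}
    (h0 : 0 < l) (hl : l < 1) (heq : t = (1 - l) * ∑' n, d n * l ^ n) :
    (d 0 ≤ 0 → t ≤ l) ∧ (d 0 = 1 → 1 - 2 * l ≤ t) := by
  have habs : |l| < 1 := by rw [abs_of_nonneg h0.le]; exact hl
  have hs : Summable fun n => d n * l ^ n := summable_aux (abs_le_of101 hd) habs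
  have hsplit : ∑' n, d n * l ^ n = d 0 + l * ∑' n, d (n + 1) * l ^ n := by
    rw [Summable.tsum_eq_zero_add hs]
    simp only [pow_zero, mul_one]
    congr 1
    rw [← tsum_mul_left]
    exact tsum_congr fun n => by ring
  set T := ∑' n, d (n + 1) * l ^ n with hT
  have hTb : |T| ≤ (1 - l)⁻¹ := abs_tsum_le (fun n => abs_le_of101 hd (n + 1)) h0.le hl
  have hpos : (0:ℝ) < 1 - l := by linarith
  obtain ⟨hT1, hT2⟩ := abs_le.mp hTb
  have hb1 : (1 - l) * l * T ≤ l := by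
    calc (1 - l) * l * T ≤ (1 - l) * l * (1 - l)⁻¹ :=
          mul_le_mul_of_nonneg_left hT2 (by positivity)
      _ = l := by field_simp
  have hb2 : -l ≤ (1 - l) * l * T := by
    calc -l = (1 - l) * l * (-(1 - l)⁻¹) := by field_simp
      _ ≤ (1 - l) * l * T := mul_le_mul_of_nonneg_left hT1 (by positivity)
  have ht' : t = (1 - l) * d 0 + (1 - l) * l * T := by rw [heq, hsplit]; ring
  refine ⟨fun hd0 => ?_, fun hd0 => ?_⟩
  · have : (1 - l) * d 0 ≤ 0 := mul_nonpos_of_nonneg_of_nonpos hpos.le hd0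
    linarith
  · rw [hd0] at ht'; linarith

lemma lam_lb {t l : ℝ} (htpos : 0 < t) (hmem : l ∈ Lam t) : min t ((1 - t) / 2) ≤ l := by
  obtain ⟨⟨h0, h13⟩, hd⟩ := hmem
  have hl1 : l < 1 := lt_of_le_of_lt h13 (by norm_num)
  have habs : |l| < 1 := by rw [abs_of_nonneg h0.le]; exact hl1
  obtain ⟨d, hdc, heq⟩ := (mem_diff_iff habs).mp hd
  obtain ⟨hk1, hk2⟩ := key_bound hdc h0 hl1 heq
  rcases hdc 0 with h | h | h
  · have := hk1 (by rw [h]; norm_num)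
    exact le_trans (min_le_left _ _) this
  · have := hk1 (by rw [h])
    exact le_trans (min_le_left _ _) this
  · have := hk2 h
    refine le_trans (min_le_right _ _) (by linarith)

/-- Continuity of the coding-to-point map on the compact parameter space. -/
lemma cont_phi : Continuous fun p : {f : ℕ → ℝ // ∀ n, |f n| ≤ 1} × {l : ℝ // l ∈ Set.Icc (0:ℝ) (1/3)} =>
    ∑' n, (p.1 : ℕ → ℝ) n * (p.2 : ℝ) ^ n := by
  refine continuous_tsum (u := fun n => (1/3 : ℝ) ^ n) (fun n => ?_) (summable_geometric_of_lt_one (by norm_num) (by norm_num)) (fun n p => ?_)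
  · exact ((continuous_apply n).comp (continuous_subtype_val.comp continuous_fst)).mul
      ((continuous_subtype_val.comp continuous_snd).pow n)
  · obtain ⟨⟨f, hf⟩, ⟨l, hl0, hl3⟩⟩ := p
    have h1 : |l| ≤ 1/3 := by rw [abs_of_nonneg hl0]; exact hl3
    rw [norm_mul, norm_pow, Real.norm_eq_abs, Real.norm_eq_abs]
    calc |f n| * |l| ^ n ≤ 1 * (1/3) ^ n := by
          exact mul_le_mul (hf n) (pow_le_pow_left₀ (abs_nonneg l) h1 n) (by positivity) one_pos.le
      _ = (1/3) ^ n := one_mul _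

theorem stmt12 (t : ℝ) (ht : t ∈ Set.Ioo (0 : ℝ) 1) (ht3 : t ≠ 1/3) :
    IsClosed (Lam t) := by
  obtain ⟨htpos, ht1⟩ := ht
  set ε := min t ((1 - t) / 2) with hε
  have hεpos : 0 < ε := lt_min htpos (by linarith)
  have hsub : Lam t ⊆ Set.Icc ε (1/3) := fun l hl => ⟨lam_lb htpos hl, hl.1.2⟩
  refine IsSeqClosed.isClosed ?_
  intro x l0 hx hlim
  have hl0m : l0 ∈ Set.Icc ε (1/3) :=
    isClosed_Icc.mem_of_tendsto hlim (Filter.Eventually.of_forall fun k => hsub (hx k))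
  have h0 : 0 < l0 := lt_of_lt_of_le hεpos hl0m.1
  have h13 : l0 ≤ 1/3 := hl0m.2
  -- extract codings
  have hcod : ∀ k, ∃ d : ℕ → ℝ, (∀ n, d n = -1 ∨ d n = 0 ∨ d n = 1) ∧
      t = (1 - x k) * ∑' n, d n * (x k) ^ n := by
    intro k
    have hk := hx k
    have habs : |x k| < 1 := by
      rw [abs_of_nonneg hk.1.1.le]
      exact lt_of_le_of_lt hk.1.2 (by norm_num)
    exact (mem_diff_iff habs).mp hk.2
  choose d hdc hdeq using hcod
  -- compactness of codings
  have hS : IsCompact (Set.univ.pi fun _ : ℕ => ({-1, 0, 1} : Set ℝ)) :=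
    isCompact_univ_pi fun _ => (Set.toFinite _).isCompact
  have hdS : ∀ k, d k ∈ Set.univ.pi fun _ : ℕ => ({-1, 0, 1} : Set ℝ) := by
    intro k n _
    rcases hdc k n with h | h | h <;> simp [h]
  obtain ⟨d0, hd0S, φ, hφ, hconv⟩ := hS.tendsto_subseq hdS
  have hd0c : ∀ n, d0 n = -1 ∨ d0 n = 0 ∨ d0 n = 1 := by
    intro n
    have := hd0S n (Set.mem_univ n)
    simpa using this
  -- package into subtype tendsto
  have hxm : ∀ k, x (φ k) ∈ Set.Icc (0:ℝ) (1/3) := fun k =>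
    ⟨(hx (φ k)).1.1.le, (hx (φ k)).1.2⟩
  have hxlim : Filter.Tendsto (fun k => x (φ k)) Filter.atTop (nhds l0) :=
    hlim.comp hφ.tendsto_atTop
  have htd1 : Filter.Tendsto
      (fun k => (⟨d (φ k), abs_le_of101 (hdc (φ k))⟩ : {f : ℕ → ℝ // ∀ n, |f n| ≤ 1}))
      Filter.atTop (nhds ⟨d0, abs_le_of101 hd0c⟩) := by
    rw [tendsto_subtype_rng]
    exact hconv
  have htd2 : Filter.Tendsto
      (fun k => (⟨x (φ k), hxm k⟩ : {l : ℝ // l ∈ Set.Icc (0:ℝ) (1/3)}))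
      Filter.atTop (nhds ⟨l0, h0.le, h13⟩) := by
    rw [tendsto_subtype_rng]
    exact hxlim
  have hts : Filter.Tendsto (fun k => ∑' n, d (φ k) n * (x (φ k)) ^ n)
      Filter.atTop (nhds (∑' n, d0 n * l0 ^ n)) :=
    (cont_phi.tendsto (⟨d0, abs_le_of101 hd0c⟩, ⟨l0, h0.le, h13⟩)).comp
      (htd1.prodMk_nhds htd2)
  have hfull : Filter.Tendsto (fun k => (1 - x (φ k)) * ∑' n, d (φ k) n * (x (φ k)) ^ n)
      Filter.atTop (nhds ((1 - l0) * ∑' n, d0 n * l0 ^ n)) :=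
    ((tendsto_const_nhds.sub hxlim).mul hts)
  have hconst : Filter.Tendsto (fun _ : ℕ => t) Filter.atTop (nhds t) := tendsto_const_nhds
  have heq0 : t = (1 - l0) * ∑' n, d0 n * l0 ^ n := by
    refine tendsto_nhds_unique ?_ hfull
    convert hconst using 1
    funext k
    exact (hdeq (φ k)).symm
  refine ⟨⟨h0, h13⟩, ?_⟩
  have habs : |l0| < 1 := by rw [abs_of_nonneg h0.le]; linarith
  exact (mem_diff_iff habs).mpr ⟨d0, hd0c, heq0⟩
end
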